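/- arXiv:1404.5660 — 2 statements merged into one kernel-verified Lean document; each statement's English description precedes it below -/
import Mathlib

section
/- Let W > 0 and let s₀ ≥ 0, and let 0 ≤ s_i ≤ s_j with s₀ + s_i > 0, s_j > 0, s₀ + s_j > 0, s_i > 0. Then (s₀+s_i)·lg(W/(s₀+s_i)) + s_j·lg(W/s_j) - (s₀+s_j)·lg(W/(s₀+s_j)) - s_i·lg(W/s_i) ≥ 0. -/
/-! Since `x * logb (W / x) = x * logb W - x * logb x`, the terms in `logb W` cancel, and the claim becomes
`f (sᵢ + s₀) - f sᵢ ≤ f (sⱼ + s₀) - f sⱼ` for the convex function `f x = x * logb 2 x`: the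
increments of a convex function over an interval of fixed length `s₀` grow with its left end. -/

open Real

theorem ConvexOn.map_add_sub_map_le_map_add_sub_map {𝕜 : Type*} [Field 𝕜] [LinearOrder 𝕜]
    [IsStrictOrderedRing 𝕜] {s : Set 𝕜} {f : 𝕜 → 𝕜} (hf : ConvexOn 𝕜 s f) {a b d : 𝕜}
    (ha : a ∈ s) (hbd : b + d ∈ s) (hab : a ≤ b) (hd : 0 ≤ d) :
    f (a + d) - f a ≤ f (b + d) - f b := by
  rcases (show 0 ≤ b + d - a by linarith).eq_or_lt with hL | hL
  · obtain rfl : d = 0 := by linarith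
    obtain rfl : b = a := by linarith
    rfl
  -- `a + d` and `b` are the points of `[a, b + d]` with swapped barycentric weights `u, v`.
  set u := (b - a) / (b + d - a)
  set v := d / (b + d - a)
  have hu : 0 ≤ u := div_nonneg (sub_nonneg.2 hab) hL.le
  have hv : 0 ≤ v := div_nonneg hd hL.le
  have huv : u + v = 1 := by
    rw [← add_div, div_eq_one_iff_eq hL.ne']; ring
  have h₁ := hf.2 ha hbd hu hv huv
  have h₂ := hf.2 ha hbd hv hu (by rw [add_comm, huv])
  have e₁ : u • a + v • (b + d) = a + d := by
    simp only [u, v, smul_eq_mul]; field_simp; ring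
  have e₂ : v • a + u • (b + d) = b := by
    simp only [u, v, smul_eq_mul]; field_simp; ring
  rw [e₁] at h₁
  rw [e₂] at h₂
  simp only [smul_eq_mul] at h₁ h₂
  linear_combination h₁ + h₂ + (f a + f (b + d)) * huv

theorem Real.convexOn_mul_logb {b : ℝ} (hb : 1 ≤ b) :
    ConvexOn ℝ (Set.Ici 0) (fun x ↦ x * logb b x) :=
  (convexOn_mul_log.smul (inv_nonneg.2 (log_nonneg hb))).congr fun x _ ↦ by
    simp only [logb, smul_eq_mul]
    ring

theorem Real.mul_logb_div {b W : ℝ} (hW : W ≠ 0) (x : ℝ) :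
    x * logb b (W / x) = x * logb b W - x * logb b x := by
  rcases eq_or_ne x 0 with rfl | hx
  · simp
  · rw [logb_div hW hx, mul_sub]

theorem exchange_inequality_general (W s₀ si sj : ℝ) (hW : 0 < W) (hs₀ : 0 ≤ s₀)
    (hsi : 0 < si) (hij : si ≤ sj) :
    0 ≤ (s₀ + si) * Real.logb 2 (W / (s₀ + si)) + sj * Real.logb 2 (W / sj)
      - (s₀ + sj) * Real.logb 2 (W / (s₀ + sj)) - si * Real.logb 2 (W / si) := by
  have key := (convexOn_mul_logb one_le_two).map_add_sub_map_le_map_add_sub_map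
    (Set.mem_Ici.2 hsi.le) (Set.mem_Ici.2 (by linarith : (0 : ℝ) ≤ sj + s₀)) hij hs₀
  rw [add_comm si, add_comm sj] at key
  simp only [mul_logb_div hW.ne']
  linear_combination key

/-- Exchange inequality for the entropy of summary trees. -/
theorem exchange_inequality (W s₀ si sj : ℝ) (hW : 0 < W) (hs₀ : 0 ≤ s₀)
    (hsi : 0 < si) (hsj : 0 < sj) (hij : si ≤ sj)
    (h1 : 0 < s₀ + si) (h2 : 0 < s₀ + sj) :
    0 ≤ (s₀ + si) * Real.logb 2 (W / (s₀ + si)) + sj * Real.logb 2 (W / sj)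
      - (s₀ + sj) * Real.logb 2 (W / (s₀ + sj)) - si * Real.logb 2 (W / si) :=
  exchange_inequality_general W s₀ si sj hW hs₀ hsi hij
end

section
/- Let W > 0, s₀ ≥ 0, and 0 < s_i ≤ s_j. Define g(x) = (s₀+x)·lg(W/(s₀+x)) + y·lg(W/y) where y is the other variable held fixed. Then the combined quantity (s₀+s_i)·lg(W/(s₀+s_i)) + s_j·lg(W/s_j) ≥ (s₀+s_j)·lg(W/(s₀+s_j)) + s_i·lg(W/s_i), with equality if and only if s_i = s_j or s₀ = 0. -/
/-!
With `f x = x log x`, each term is `a · lg (W / a) = (a log W - f a) / log 2`, and both sides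
carry the same total mass `s₀ + sᵢ + sⱼ`, so the `log W` parts cancel and the claim becomes
`f (sᵢ + s₀) + f sⱼ ≤ f sᵢ + f (sⱼ + s₀)`: the increment of the strictly convex `f` over a step
of length `s₀` grows strictly with the starting point.
-/

open Real Set

theorem StrictConvexOn.increment_lt_increment {𝕜 : Type*} [Field 𝕜] [LinearOrder 𝕜]
    [IsStrictOrderedRing 𝕜] {s : Set 𝕜} {f : 𝕜 → 𝕜} (hf : StrictConvexOn 𝕜 s f) {x y h : 𝕜}
    (hx : x ∈ s) (hyh : y + h ∈ s) (hxy : x < y) (hh : 0 < h) :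
    f (x + h) - f x < f (y + h) - f y := by
  have hd : 0 < y - x + h := by linarith
  -- `x + h` and `y` are the two convex combinations of `x` and `y + h` with weights `t, 1 - t`.
  set t := (y - x) / (y - x + h) with ht_def
  have ht : 0 < t := div_pos (sub_pos.2 hxy) hd
  have ht' : 0 < 1 - t := by
    rw [ht_def, one_sub_div hd.ne', add_sub_cancel_left]
    exact div_pos hh hd
  have hne : x ≠ y + h := by linarith
  have h₁ := hf.2 hx hyh hne ht ht' (by ring)
  have h₂ := hf.2 hx hyh hne ht' ht (by ring)
  have e₁ : t • x + (1 - t) • (y + h) = x + h := by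
    simp only [ht_def, smul_eq_mul]; field_simp; ring
  have e₂ : (1 - t) • x + t • (y + h) = y := by
    simp only [ht_def, smul_eq_mul]; field_simp; ring
  rw [e₁, smul_eq_mul, smul_eq_mul] at h₁
  rw [e₂, smul_eq_mul, smul_eq_mul] at h₂
  linear_combination h₁ + h₂

theorem mul_logb_div_self_eq {b W x : ℝ} (hW : W ≠ 0) (hx : x ≠ 0) :
    x * logb b (W / x) = (x * log W - x * log x) / log b := by
  rw [logb, log_div hW hx]
  ring

theorem exchange_lt {W s₀ si sj : ℝ} (hW : 0 < W) (hs₀ : 0 < s₀) (hsi : 0 < si)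
    (hij : si < sj) :
    (s₀ + sj) * logb 2 (W / (s₀ + sj)) + si * logb 2 (W / si) <
      (s₀ + si) * logb 2 (W / (s₀ + si)) + sj * logb 2 (W / sj) := by
  have hsj : 0 < sj := hsi.trans hij
  have key := strictConvexOn_mul_log.increment_lt_increment (mem_Ici.2 hsi.le)
    (mem_Ici.2 (by positivity : (0 : ℝ) ≤ sj + s₀)) hij hs₀
  rw [add_comm si, add_comm sj] at key
  rw [mul_logb_div_self_eq hW.ne' (by positivity), mul_logb_div_self_eq hW.ne' hsi.ne',
    mul_logb_div_self_eq hW.ne' (by positivity), mul_logb_div_self_eq hW.ne' hsj.ne',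
    ← add_div, ← add_div, div_lt_div_iff_of_pos_right (log_pos one_lt_two)]
  linear_combination key

/-- Strict exchange inequality: grouping the smaller mass with s₀ is at least as good,
with equality iff s_i = s_j or s₀ = 0. -/
theorem exchange_strict (W s₀ si sj : ℝ) (hW : 0 < W) (hs₀ : 0 ≤ s₀)
    (hsi : 0 < si) (hij : si ≤ sj) :
    ((s₀ + sj) * Real.logb 2 (W / (s₀ + sj)) + si * Real.logb 2 (W / si) ≤
      (s₀ + si) * Real.logb 2 (W / (s₀ + si)) + sj * Real.logb 2 (W / sj)) ∧
    ((s₀ + si) * Real.logb 2 (W / (s₀ + si)) + sj * Real.logb 2 (W / sj) =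
      (s₀ + sj) * Real.logb 2 (W / (s₀ + sj)) + si * Real.logb 2 (W / si)
      ↔ si = sj ∨ s₀ = 0) := by
  rcases hs₀.eq_or_lt with rfl | hs₀
  · simp only [zero_add, or_true, iff_true]
    exact ⟨(add_comm _ _).le, add_comm _ _⟩
  rcases hij.eq_or_lt with rfl | hij
  · exact ⟨le_rfl, iff_of_true rfl (Or.inl rfl)⟩
  have hlt := exchange_lt hW hs₀ hsi hij
  exact ⟨hlt.le, iff_of_false hlt.ne' (by rintro (h | h); exacts [hij.ne h, hs₀.ne' h])⟩
end
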